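/- Second-order perturbation solution: with γ = (ω²−ω)/2 and a = a_k^i − a_k^j, the function B_{k,2}(τ) = ω² γ 𝓑_k^{(3)}(τ) + γ² 𝓑_k^{(2)}(τ), where 𝓑_k^{(2)}(τ) = a⁴ (ξ_k²/(2κ_k²)) ((1 − e^{−2κ_k τ})/κ_k − 2τ e^{−κ_k τ}) and 𝓑_k^{(3)}(τ) = a⁴ ρ_k² ξ_k² ((1 − e^{−κ_k τ})/κ_k³ − τ e^{−κ_k τ}/κ_k² − τ² e^{−κ_k τ}/(2κ_k)), satisfies B_{k,2}' = −κ_k B_{k,2} + ω a ρ_k ξ_k B_{k,1} + (ξ_k²/2) B_{k,0}² with B_{k,2}(0) = 0, where B_{k,0}, B_{k,1} are as in the first-order statement. -/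

import Mathlib

/-!
`𝓑⁽³⁾` and `𝓑⁽²⁾` each solve a linear equation `y' = -κ y + g` with `y(0) = 0`, forced by a
multiple of `B₁` and of `B₀²` respectively, so their combination `B₂` solves the combined
equation. The profiles `relaxₙ` are the iterated Duhamel integrals
`relaxₙ(τ) = ∫₀^τ e^{-κ(τ-s)} relaxₙ₋₁(s) ds` starting from `relax₀ = (1 - e^{-κτ})/κ`, whence
`relax₂' = -κ relax₂ + relax₁`; likewise `relaxSq` is the Duhamel integral of `relax₀² / 2`.
-/

open Real

section Relaxation

variable (κ : ℝ)

noncomputable def relax0 (τ : ℝ) : ℝ := (1 - exp (-κ * τ)) / κ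

noncomputable def relax1 (τ : ℝ) : ℝ :=
  1 / κ ^ 2 - exp (-κ * τ) / κ ^ 2 - τ * exp (-κ * τ) / κ

noncomputable def relax2 (τ : ℝ) : ℝ :=
  (1 - exp (-κ * τ)) / κ ^ 3 - τ * exp (-κ * τ) / κ ^ 2 - τ ^ 2 * exp (-κ * τ) / (2 * κ)

noncomputable def relaxSq (τ : ℝ) : ℝ :=
  ((1 - exp (-2 * κ * τ)) / κ - 2 * τ * exp (-κ * τ)) / (2 * κ ^ 2)

variable {κ}

theorem hasDerivAt_relax2 (hκ : κ ≠ 0) (τ : ℝ) :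
    HasDerivAt (relax2 κ) (-κ * relax2 κ τ + relax1 κ τ) τ := by
  have he := (hasDerivAt_const_mul (x := τ) (-κ)).exp
  refine (((((hasDerivAt_const τ 1).sub he).div_const (κ ^ 3)).sub
    (((hasDerivAt_id τ).mul he).div_const (κ ^ 2))).sub
    (((hasDerivAt_pow 2 τ).mul he).div_const (2 * κ))).congr_deriv ?_
  simp only [relax1, relax2, id]
  field_simp
  ring

theorem hasDerivAt_relaxSq (hκ : κ ≠ 0) (τ : ℝ) :
    HasDerivAt (relaxSq κ) (-κ * relaxSq κ τ + relax0 κ τ ^ 2 / 2) τ := by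
  have he := (hasDerivAt_const_mul (x := τ) (-κ)).exp
  have he2 := (hasDerivAt_const_mul (x := τ) (-2 * κ)).exp
  refine (((((hasDerivAt_const τ 1).sub he2).div_const κ).sub
    (((hasDerivAt_id τ).const_mul 2).mul he)).div_const (2 * κ ^ 2)).congr_deriv ?_
  have hsq : exp (-2 * κ * τ) = exp (-κ * τ) ^ 2 := by
    rw [← exp_nat_mul]
    ring_nf
  simp only [relax0, relaxSq, id, hsq]
  field_simp
  ring

@[simp]
theorem relax2_zero : relax2 κ 0 = 0 := by simp [relax2]

@[simp]
theorem relaxSq_zero : relaxSq κ 0 = 0 := by simp [relaxSq]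

end Relaxation

theorem perturbation_second_order_general
    (κ ξ ρ a ω : ℝ) (hκ : 0 < κ) (γ : ℝ)
    (B0 B1 B2 : ℝ → ℝ) (calB2 calB3 : ℝ → ℝ)
    (hB0 : ∀ τ, B0 τ = γ * a ^ 2 * (1 - Real.exp (-κ * τ)) / κ)
    (hB1 : ∀ τ, B1 τ = ω * γ * a ^ 3 * ρ * ξ *
        (1 / κ ^ 2 - Real.exp (-κ * τ) / κ ^ 2 - τ * Real.exp (-κ * τ) / κ))
    (hcalB2 : ∀ τ, calB2 τ = a ^ 4 * (ξ ^ 2 / (2 * κ ^ 2)) *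
        ((1 - Real.exp (-2 * κ * τ)) / κ - 2 * τ * Real.exp (-κ * τ)))
    (hcalB3 : ∀ τ, calB3 τ = a ^ 4 * ρ ^ 2 * ξ ^ 2 *
        ((1 - Real.exp (-κ * τ)) / κ ^ 3 - τ * Real.exp (-κ * τ) / κ ^ 2
          - τ ^ 2 * Real.exp (-κ * τ) / (2 * κ)))
    (hB2 : ∀ τ, B2 τ = ω ^ 2 * γ * calB3 τ + γ ^ 2 * calB2 τ) :
    (∀ τ, HasDerivAt B2
        (-κ * B2 τ + ω * a * ρ * ξ * B1 τ + ξ ^ 2 / 2 * (B0 τ) ^ 2) τ) ∧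
    B2 0 = 0 := by
  have hB2_eq : B2 = fun τ => ω ^ 2 * γ * (a ^ 4 * ρ ^ 2 * ξ ^ 2) * relax2 κ τ
      + γ ^ 2 * (a ^ 4 * ξ ^ 2) * relaxSq κ τ := by
    funext τ
    rw [hB2, hcalB2, hcalB3, relax2, relaxSq]
    ring
  refine ⟨fun τ => ?_, by simp [hB2_eq]⟩
  rw [hB2_eq]
  refine (((hasDerivAt_relax2 hκ.ne' τ).const_mul _).add
    ((hasDerivAt_relaxSq hκ.ne' τ).const_mul _)).congr_deriv ?_
  simp only [hB1, hB0, relax0, relax1]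
  ring

/-- Second-order term of the small vol-of-vol perturbation expansion: with
`γ = (ω²−ω)/2` and `a = a_k^i − a_k^j`, the function
`B₂(τ) = ω² γ 𝓑⁽³⁾(τ) + γ² 𝓑⁽²⁾(τ)`, where
`𝓑⁽²⁾(τ) = a⁴ (ξ²/(2κ²)) ((1 − e^{−2κτ})/κ − 2τ e^{−κτ})` and
`𝓑⁽³⁾(τ) = a⁴ ρ² ξ² ((1 − e^{−κτ})/κ³ − τ e^{−κτ}/κ² − τ² e^{−κτ}/(2κ))`, satisfies
`B₂' = −κ B₂ + ω a ρ ξ B₁ + (ξ²/2) B₀²` with `B₂(0) = 0`. -/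
theorem perturbation_second_order
    (κ ξ ρ a ω : ℝ) (hκ : 0 < κ) (γ : ℝ) (hγ : γ = (ω ^ 2 - ω) / 2)
    (B0 B1 B2 : ℝ → ℝ) (calB2 calB3 : ℝ → ℝ)
    (hB0 : ∀ τ, B0 τ = γ * a ^ 2 * (1 - Real.exp (-κ * τ)) / κ)
    (hB1 : ∀ τ, B1 τ = ω * γ * a ^ 3 * ρ * ξ *
        (1 / κ ^ 2 - Real.exp (-κ * τ) / κ ^ 2 - τ * Real.exp (-κ * τ) / κ))
    (hcalB2 : ∀ τ, calB2 τ = a ^ 4 * (ξ ^ 2 / (2 * κ ^ 2)) *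
        ((1 - Real.exp (-2 * κ * τ)) / κ - 2 * τ * Real.exp (-κ * τ)))
    (hcalB3 : ∀ τ, calB3 τ = a ^ 4 * ρ ^ 2 * ξ ^ 2 *
        ((1 - Real.exp (-κ * τ)) / κ ^ 3 - τ * Real.exp (-κ * τ) / κ ^ 2
          - τ ^ 2 * Real.exp (-κ * τ) / (2 * κ)))
    (hB2 : ∀ τ, B2 τ = ω ^ 2 * γ * calB3 τ + γ ^ 2 * calB2 τ) :
    (∀ τ, HasDerivAt B2
        (-κ * B2 τ + ω * a * ρ * ξ * B1 τ + ξ ^ 2 / 2 * (B0 τ) ^ 2) τ) ∧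
    B2 0 = 0 :=
  perturbation_second_order_general κ ξ ρ a ω hκ γ B0 B1 B2 calB2 calB3 hB0 hB1 hcalB2 hcalB3 hB2
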